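/- arXiv:1801.09488 — 11 statements merged into one kernel-verified Lean document; each statement's English description precedes it below -/
import Mathlib

section
/- Let S ⊆ {0,…,n} be a Sidon set (all pairwise sums i+j for i,j ∈ S are distinct) and let R ⊆ {0,1}^n be the symmetric relation accepting exactly the tuples whose Hamming weight lies in S. Then R is preserved by the partial 3-universal operation u₃. -/
/-- Hamming weight of a Boolean tuple. -/
def hamming {n : ℕ} (t : Fin n → Bool) : ℕ :=
  (Finset.univ.filter fun i => t i = true).card

/-- Index type for the arity of the partial `k`-universal operation. -/
abbrev UIdx (k : ℕ) := {v : Fin k → Bool // v ≠ fun _ => false}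

/-- `uCol k w b`: `w` is in the domain of `u_k` with value `b`. -/
def uCol (k : ℕ) (w : UIdx k → Bool) (b : Bool) : Prop :=
  (∀ v, w v = b) ∨ (∃ a : Fin k, (∀ v, w v = v.1 a) ∧ b = false) ∨
    (∃ a : Fin k, (∀ v, w v = !(v.1 a)) ∧ b = true)

/-- Preservation by the partial `k`-universal operation. -/
def preservedByU (k n : ℕ) (R : Set (Fin n → Bool)) : Prop :=
  ∀ (t : UIdx k → (Fin n → Bool)) (s : Fin n → Bool),
    (∀ v, t v ∈ R) → (∀ i, uCol k (fun v => t v i) (s i)) → s ∈ R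

/-- The unit vector `e a`. -/
def uE (a : Fin 3) : UIdx 3 :=
  ⟨fun j => decide (j = a), by
    intro h
    have := congrFun h a
    simp at this⟩

/-- The complement of the unit vector `e a`. -/
def uEbar (a : Fin 3) : UIdx 3 :=
  ⟨fun j => !decide (j = a), by
    intro h
    obtain ⟨j, hj⟩ := exists_ne a
    have := congrFun h j
    simp [hj] at this⟩

/-- The all-ones vector. -/
def uOne : UIdx 3 :=
  ⟨fun _ => true, by
    intro h
    simpa using congrFun h 0⟩

lemma colKey (w : UIdx 3 → Bool) (b : Bool) (h : uCol 3 w b) :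
    (∀ a, (w (uE a)).toNat + (w (uEbar a)).toNat = (w uOne).toNat + b.toNat) ∧
    (w (uE 0)).toNat + (w (uE 1)).toNat + (w (uE 2)).toNat
      = (w uOne).toNat + 2 * b.toNat := by
  rcases h with h | ⟨a, ha, hb⟩ | ⟨a, ha, hb⟩
  · simp only [h]
    cases b <;> simp
  · subst hb
    simp only [ha, uE, uEbar, uOne]
    clear ha
    revert a; decide
  · subst hb
    simp only [ha, uE, uEbar, uOne]
    clear ha
    revert a; decide

lemma hamming_eq_sum {n : ℕ} (t : Fin n → Bool) : hamming t = ∑ i, (t i).toNat := by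
  unfold hamming
  rw [Finset.card_filter]
  apply Finset.sum_congr rfl
  intro i _
  cases t i <;> simp

/-- If `S ⊆ {0,…,n}` is a Sidon set, then the symmetric relation accepting
exactly the tuples whose Hamming weight lies in `S` is preserved by the
partial 3-universal operation. -/
theorem stmt_4 (n : ℕ) (S : Set ℕ) (hSn : ∀ x ∈ S, x ≤ n)
    (hSidon : ∀ a ∈ S, ∀ b ∈ S, ∀ c ∈ S, ∀ d ∈ S,
      a + b = c + d → (a = c ∧ b = d) ∨ (a = d ∧ b = c)) :
    preservedByU 3 n {t : Fin n → Bool | hamming t ∈ S} := by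
  intro t s ht hcol
  have key1 : ∀ a, hamming (t (uE a)) + hamming (t (uEbar a))
      = hamming (t uOne) + hamming s := by
    intro a
    simp only [hamming_eq_sum]
    have h := Finset.sum_congr rfl fun i (_ : i ∈ Finset.univ) => (colKey _ _ (hcol i)).1 a
    simp only [Finset.sum_add_distrib] at h
    omega
  have key2 : hamming (t (uE 0)) + hamming (t (uE 1)) + hamming (t (uE 2))
      = hamming (t uOne) + 2 * hamming s := by
    simp only [hamming_eq_sum]
    have h := Finset.sum_congr rfl fun i (_ : i ∈ Finset.univ) => (colKey _ _ (hcol i)).2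
    simp only [Finset.sum_add_distrib, ← Finset.mul_sum] at h
    omega
  set x0 := hamming (t (uE 0)) with hx0
  set x1 := hamming (t (uE 1)) with hx1
  set x2 := hamming (t (uE 2)) with hx2
  set y0 := hamming (t (uEbar 0)) with hy0
  set y1 := hamming (t (uEbar 1)) with hy1
  set y2 := hamming (t (uEbar 2)) with hy2
  set z := hamming (t uOne) with hz
  set W := hamming s with hW
  have hx0S : x0 ∈ S := ht (uE 0)
  have hx1S : x1 ∈ S := ht (uE 1)
  have hx2S : x2 ∈ S := ht (uE 2)
  have hy0S : y0 ∈ S := ht (uEbar 0)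
  have hy1S : y1 ∈ S := ht (uEbar 1)
  have hy2S : y2 ∈ S := ht (uEbar 2)
  have hzS : z ∈ S := ht uOne
  have k0 := key1 0
  have k1 := key1 1
  have k2 := key1 2
  show W ∈ S
  have h01 := hSidon _ hx0S _ hy0S _ hx1S _ hy1S (by omega)
  rcases h01 with ⟨hxx, hyy⟩ | ⟨hxy, hyx⟩
  · have h02 := hSidon _ hx0S _ hy0S _ hx2S _ hy2S (by omega)
    rcases h02 with ⟨hxx2, hyy2⟩ | ⟨hxy2, hyx2⟩
    · -- all x equal, all y equal
      have hfin := hSidon _ hzS _ hx0S _ hy0S _ hy0S (by omega)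
      rcases hfin with ⟨hzy, hxy0⟩ | ⟨hzy, hxy0⟩ <;>
        · have : W = x0 := by omega
          rw [this]; exact hx0S
    · -- x0 = y2 ⇒ x1 = W
      have : W = x1 := by omega
      rw [this]; exact hx1S
  · -- x0 = y1 ⇒ x2 = W
    have : W = x2 := by omega
    rw [this]; exact hx2S
end

section
/- Every k-ary relation R ⊆ D^k over a finite set D that is preserved by the partial k-NU operation on D is (k−1)-decomposable: for every tuple t ∈ D^k \ R there exists an index set I ⊆ [k] with |I| ≤ k−1 such that the projection of t onto I is not in the projection of R onto I. -/
/-- Preservation of a relation `R ⊆ D^n` by the partial `k`-NU operation over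
the domain `D`: whenever `t 1, …, t k ∈ R` and every column deviates from `s`
in at most one position, `s ∈ R`. -/
def preservedByNUD (D : Type) (k n : ℕ) (R : Set (Fin n → D)) : Prop :=
  ∀ (t : Fin k → (Fin n → D)) (s : Fin n → D),
    (∀ a, t a ∈ R) →
    (∀ i, ∃ j : Fin k, ∀ a, a ≠ j → t a i = s i) → s ∈ R

/-- Every `k`-ary relation over a finite domain preserved by the partial
`k`-NU operation is `(k-1)`-decomposable: for every `t ∉ R` there is an index
set `I` of size at most `k-1` such that the projection of `t` onto `I` is not
in the projection of `R` onto `I`. -/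
theorem stmt_6 {D : Type} [Fintype D] (k : ℕ) (hk : 3 ≤ k)
    (R : Set (Fin k → D)) (hR : preservedByNUD D k k R)
    (t : Fin k → D) (ht : t ∉ R) :
    ∃ I : Finset (Fin k), I.card ≤ k - 1 ∧ ∀ u ∈ R, ∃ i ∈ I, u i ≠ t i := by
  have h : ∃ j : Fin k, ∀ u ∈ R, ∃ i, i ≠ j ∧ u i ≠ t i := by
    by_contra hcon
    push_neg at hcon
    choose u hu hu' using hcon
    exact ht (hR u t hu (fun i => ⟨i, fun a ha => hu' a i (Ne.symm ha)⟩))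
  obtain ⟨j, hj⟩ := h
  refine ⟨{j}ᶜ, ?_, ?_⟩
  · have : ({j}ᶜ : Finset (Fin k)).card = k - 1 := by
      rw [Finset.card_compl, Finset.card_singleton, Fintype.card_fin]
    omega
  · intro u hu
    obtain ⟨i, hij, hne⟩ := hj u hu
    exact ⟨i, by simpa using hij, hne⟩
end

section
/- Let R ⊆ {0,1}^n with 0^n ∉ R, and call t ∈ R minimal if t = χ_S for some S ⊆ [n] and no proper subset S' ⊂ S has χ_{S'} ∈ R. If R is preserved by the partial k-NU operation, then for every weight i, the family of sets S with χ_S minimal in R and |S| = i contains no sunflower with k sets. -/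
/-- Preservation by the partial `k`-NU operation. -/
def preservedByNU (k n : ℕ) (R : Set (Fin n → Bool)) : Prop :=
  ∀ (t : Fin k → (Fin n → Bool)) (s : Fin n → Bool),
    (∀ a, t a ∈ R) →
    (∀ i, ∃ j : Fin k, ∀ a, a ≠ j → t a i = s i) → s ∈ R

/-- Characteristic Boolean tuple of a set `S ⊆ [n]`. -/
def chi {n : ℕ} (S : Finset (Fin n)) : Fin n → Bool := fun i => decide (i ∈ S)

/-- If `R ⊆ {0,1}^n` with `0^n ∉ R` is preserved by the partial `k`-NU
operation, then the family of sets `S` with `χ_S` minimal in `R` and `|S| = i`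
contains no sunflower with `k` sets: there are no `k` pairwise distinct such
sets whose pairwise intersections all equal a common core. -/
theorem stmt_7 (n k i : ℕ) (hk : 3 ≤ k) (R : Set (Fin n → Bool))
    (h0 : (fun _ => false) ∉ R) (hR : preservedByNU k n R)
    (S : Fin k → Finset (Fin n)) (hinj : Function.Injective S)
    (hmem : ∀ a, chi (S a) ∈ R)
    (hminl : ∀ a, ∀ S' ⊂ S a, chi S' ∉ R)
    (hcard : ∀ a, (S a).card = i)
    (C : Finset (Fin n)) (hC : ∀ a b, a ≠ b → S a ∩ S b = C) :
    False := by
  set a0 : Fin k := ⟨0, by omega⟩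
  set a1 : Fin k := ⟨1, by omega⟩
  have h01 : a0 ≠ a1 := by simp [a0, a1, Fin.ext_iff]
  have hCsub : ∀ a, C ⊆ S a := by
    intro a
    by_cases ha : a = a0
    · subst ha; rw [← hC a0 a1 h01]; exact Finset.inter_subset_left
    · rw [← hC a0 a (fun h => ha h.symm)]; exact Finset.inter_subset_right
  have hmemC : chi C ∈ R := by
    apply hR (fun a => chi (S a)) (chi C) hmem
    intro j
    by_cases hj : ∃ a, j ∈ S a ∧ j ∉ C
    · obtain ⟨a, hja, hjc⟩ := hj
      refine ⟨a, fun b hb => ?_⟩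
      have hjb : j ∉ S b := by
        intro hjb
        exact hjc ((hC b a hb) ▸ Finset.mem_inter.mpr ⟨hjb, hja⟩)
      simp [chi, hjb, hjc]
    · push_neg at hj
      refine ⟨a0, fun b _ => ?_⟩
      by_cases hjC : j ∈ C
      · simp [chi, hjC, hCsub b hjC]
      · have hb : j ∉ S b := fun h => hjC (hj b h)
        simp [chi, hjC, hb]
  have hss : C ⊂ S a0 := by
    rcases (hCsub a0).ssubset_or_eq with h | h
    · exact h
    · exfalso
      apply h01
      apply hinj
      apply Finset.eq_of_subset_of_card_le (h ▸ hCsub a1)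
      rw [hcard, hcard]
  exact hminl a0 C hss hmemC
end

section
/- For a relation R ⊆ {0,1}^n, the indicator function f_R has block sensitivity strictly less than k if and only if both R and its complement {0,1}^n \ R are preserved by the partial k-NU operation. -/
/-- `t` with the bits in `S` flipped. -/
def flipSet {n : ℕ} (t : Fin n → Bool) (S : Finset (Fin n)) : Fin n → Bool :=
  fun i => if i ∈ S then !(t i) else t i

/-- `f` has block sensitivity (strictly) less than `k`: there is no point `t`
and `k` pairwise disjoint nonempty blocks whose flips all change the value
of `f`. -/
def blockSensLt {n : ℕ} (k : ℕ) (f : (Fin n → Bool) → Bool) : Prop :=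
  ¬ ∃ (t : Fin n → Bool) (S : Fin k → Finset (Fin n)),
      (∀ a, (S a).Nonempty) ∧ (∀ a b, a ≠ b → Disjoint (S a) (S b)) ∧
      ∀ a, f (flipSet t (S a)) ≠ f t

lemma flip_diff {n : ℕ} (s u : Fin n → Bool) :
    flipSet s (Finset.univ.filter (fun i => u i ≠ s i)) = u := by
  funext i
  simp only [flipSet, Finset.mem_filter, Finset.mem_univ, true_and]
  by_cases h : u i = s i
  · simp [h]
  · simp only [h, if_pos, ne_eq, not_false_iff, if_true]
    cases hu : u i <;> cases hs : s i <;> simp_all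

lemma helper {n k : ℕ} (f : (Fin n → Bool) → Bool) (hbs : blockSensLt k f)
    (t : Fin k → (Fin n → Bool)) (s : Fin n → Bool)
    (hnu : ∀ i, ∃ j : Fin k, ∀ a, a ≠ j → t a i = s i)
    (hne : ∀ a, f (t a) ≠ f s) : False := by
  apply hbs
  refine ⟨s, fun a => Finset.univ.filter (fun i => t a i ≠ s i), ?_, ?_, ?_⟩
  · intro a
    rw [Finset.filter_nonempty_iff]
    by_contra h
    push_neg at h
    have hts : t a = s := funext fun i => h i (Finset.mem_univ i)
    exact hne a (by rw [hts])
  · intro a b hab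
    rw [Finset.disjoint_left]
    intro i hia hib
    simp only [Finset.mem_filter, Finset.mem_univ, true_and] at hia hib
    obtain ⟨j, hj⟩ := hnu i
    rcases eq_or_ne a j with rfl | ha
    · exact hib (hj b fun hbj => hab hbj.symm)
    · exact hia (hj a ha)
  · intro a
    rw [flip_diff]
    exact hne a

/-- The indicator function of `R ⊆ {0,1}^n` has block sensitivity less than
`k` if and only if both `R` and its complement are preserved by the partial
`k`-NU operation. -/
theorem stmt_8 (n k : ℕ) (hk : 3 ≤ k) (R : Set (Fin n → Bool))
    (f : (Fin n → Bool) → Bool) (hf : ∀ t, f t = true ↔ t ∈ R) :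
    blockSensLt k f ↔ (preservedByNU k n R ∧ preservedByNU k n Rᶜ) := by
  constructor
  · intro hbs
    constructor
    · intro t s ht hnu
      by_contra hs
      refine helper f hbs t s hnu (fun a => ?_)
      have h1 : f (t a) = true := (hf (t a)).mpr (ht a)
      have h2 : f s ≠ true := fun h => hs ((hf s).mp h)
      rw [h1]
      exact fun h => h2 h.symm
    · intro t s ht hnu
      by_contra hs
      simp only [Set.mem_compl_iff, not_not] at hs ht
      refine helper f hbs t s hnu (fun a => ?_)
      have h1 : f (t a) ≠ true := fun h => (ht a) ((hf _).mp h)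
      have h2 : f s = true := (hf s).mpr hs
      rw [h2]
      exact h1
  · rintro ⟨hR, hRc⟩ ⟨t, S, hSne, hSdisj, hSval⟩
    have hnu : ∀ i, ∃ j : Fin k, ∀ a, a ≠ j → flipSet t (S a) i = t i := by
      intro i
      by_cases h : ∃ a, i ∈ S a
      · obtain ⟨a, ha⟩ := h
        refine ⟨a, fun b hb => ?_⟩
        have hnb : i ∉ S b := fun hib => (Finset.disjoint_left.mp (hSdisj b a hb)) hib ha
        simp [flipSet, hnb]
      · push_neg at h
        refine ⟨⟨0, by omega⟩, fun b _ => ?_⟩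
        simp [flipSet, h b]
    cases hft : f t with
    | false =>
      have ht : ∀ a, flipSet t (S a) ∈ R := by
        intro a
        apply (hf _).mp
        cases hv : f (flipSet t (S a))
        · exact absurd (hv.trans hft.symm) (hSval a)
        · rfl
      have hmem := hR (fun a => flipSet t (S a)) t ht hnu
      have := (hf t).mpr hmem
      rw [hft] at this
      exact Bool.false_ne_true this
    | true =>
      have ht : ∀ a, flipSet t (S a) ∈ Rᶜ := by
        intro a hmem
        exact hSval a (((hf _).mpr hmem).trans hft.symm)
      have hmem := hRc (fun a => flipSet t (S a)) t ht hnu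
      exact hmem ((hf t).mp hft)
end

section
/- Let R ⊆ {0,1}^n be a symmetric relation (membership depends only on Hamming weight) preserved by the partial 3-edge operation, and let S ⊆ {0,…,n} be the set of accepted weights. If a, a+b ∈ S with b > 0, a+2b ∉ S, and a+2b ≤ n, then a < b. -/
/-- `e3Col w b`: the column `w` is in the domain of the partial 3-edge
operation (patterns `(x,x,y,y)`, `(x,y,x,y)`, `(y,y,y,x)`) with value `b`. -/
def e3Col (w : Fin 4 → Bool) (b : Bool) : Prop :=
  (w 0 = w 1 ∧ w 2 = b ∧ w 3 = b) ∨ (w 0 = w 2 ∧ w 1 = b ∧ w 3 = b) ∨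
    (w 0 = b ∧ w 1 = b ∧ w 2 = b)

/-- Preservation by the partial 3-edge operation. -/
def preservedByE3 (n : ℕ) (R : Set (Fin n → Bool)) : Prop :=
  ∀ (t : Fin 4 → (Fin n → Bool)) (s : Fin n → Bool),
    (∀ a, t a ∈ R) → (∀ i, e3Col (fun a => t a i) (s i)) → s ∈ R

lemma card_filter_Ico (n lo hi : ℕ) (h : hi ≤ n) :
    (Finset.univ.filter fun i : Fin n => lo ≤ i.val ∧ i.val < hi).card = hi - lo := by
  have hset : (Finset.univ.filter fun i : Fin n => lo ≤ i.val ∧ i.val < hi)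
      = (Finset.Ico lo hi).attachFin
        (fun m hm => lt_of_lt_of_le (Finset.mem_Ico.mp hm).2 h) := by
    ext i
    simp [Finset.mem_attachFin, Finset.mem_Ico]
  rw [hset, Finset.card_attachFin, Nat.card_Ico]

lemma hamming_decide (n lo hi : ℕ) (h : hi ≤ n) :
    hamming (fun i : Fin n => decide (lo ≤ i.val ∧ i.val < hi)) = hi - lo := by
  unfold hamming
  simp only [decide_eq_true_eq]
  exact card_filter_Ico n lo hi h

lemma hamming_decide_or (n lo₁ hi₁ lo₂ hi₂ : ℕ) (h1 : hi₁ ≤ n) (h2 : hi₂ ≤ n)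
    (hdisj : hi₁ ≤ lo₂) :
    hamming (fun i : Fin n =>
      decide ((lo₁ ≤ i.val ∧ i.val < hi₁) ∨ (lo₂ ≤ i.val ∧ i.val < hi₂)))
      = (hi₁ - lo₁) + (hi₂ - lo₂) := by
  unfold hamming
  simp only [decide_eq_true_eq]
  rw [Finset.filter_or, Finset.card_union_of_disjoint, card_filter_Ico n lo₁ hi₁ h1,
    card_filter_Ico n lo₂ hi₂ h2]
  rw [Finset.disjoint_filter]
  intro i _ hi1 hi2
  omega

/-- For a symmetric relation preserved by the partial 3-edge operation with
accepted weight set `S`: if `a, a+b ∈ S` with `b > 0`, `a+2b ∉ S` and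
`a+2b ≤ n`, then `a < b`. -/
theorem stmt_9 (n : ℕ) (S : Set ℕ) (R : Set (Fin n → Bool))
    (hsym : ∀ t, t ∈ R ↔ hamming t ∈ S)
    (hR : preservedByE3 n R)
    (a b : ℕ) (hb : 0 < b) (ha : a ∈ S) (hab : a + b ∈ S)
    (h2 : a + 2 * b ∉ S) (hle : a + 2 * b ≤ n) :
    a < b := by
  by_contra hcon
  push_neg at hcon
  set t1 : Fin n → Bool := fun i => decide (2*b ≤ i.val ∧ i.val < a+2*b) with ht1
  set t2 : Fin n → Bool := fun i => decide (b ≤ i.val ∧ i.val < a+2*b) with ht2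
  set t3 : Fin n → Bool := fun i =>
    decide ((0 ≤ i.val ∧ i.val < b) ∨ (2*b ≤ i.val ∧ i.val < a+2*b)) with ht3
  set t4 : Fin n → Bool := fun i =>
    decide ((0 ≤ i.val ∧ i.val < 2*b) ∨ (3*b ≤ i.val ∧ i.val < a+2*b)) with ht4
  set s : Fin n → Bool := fun i => decide (0 ≤ i.val ∧ i.val < a+2*b) with hs
  have w1 : hamming t1 = a := by rw [ht1, hamming_decide n _ _ hle]; omega
  have w2 : hamming t2 = a + b := by rw [ht2, hamming_decide n _ _ hle]; omega
  have w3 : hamming t3 = a + b := by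
    rw [ht3, hamming_decide_or n 0 b (2*b) (a+2*b) (by omega) hle (by omega)]; omega
  have w4 : hamming t4 = a + b := by
    rw [ht4, hamming_decide_or n 0 (2*b) (3*b) (a+2*b) (by omega) hle (by omega)]; omega
  have ws : hamming s = a + 2*b := by rw [hs, hamming_decide n _ _ hle]; omega
  have hsR : s ∈ R := by
    apply hR ![t1, t2, t3, t4] s
    · intro k
      fin_cases k
      · exact (hsym t1).mpr (w1 ▸ ha)
      · exact (hsym t2).mpr (w2 ▸ hab)
      · exact (hsym t3).mpr (w3 ▸ hab)
      · exact (hsym t4).mpr (w4 ▸ hab)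
    · intro i
      have e0 : (fun k => ![t1, t2, t3, t4] k i) 0 = t1 i := rfl
      have e1 : (fun k => ![t1, t2, t3, t4] k i) 1 = t2 i := rfl
      have e2 : (fun k => ![t1, t2, t3, t4] k i) 2 = t3 i := rfl
      have e3 : (fun k => ![t1, t2, t3, t4] k i) 3 = t4 i := rfl
      unfold e3Col
      rw [e0, e1, e2, e3]
      rcases lt_or_ge i.val b with h | h
      · have v1 : t1 i = false := by rw [ht1]; simp only [decide_eq_false_iff_not]; omega
        have v2 : t2 i = false := by rw [ht2]; simp only [decide_eq_false_iff_not]; omega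
        have v3 : t3 i = true := by rw [ht3]; simp only [decide_eq_true_eq]; omega
        have v4 : t4 i = true := by rw [ht4]; simp only [decide_eq_true_eq]; omega
        have vs : s i = true := by rw [hs]; simp only [decide_eq_true_eq]; omega
        exact Or.inl ⟨v1.trans v2.symm, v3.trans vs.symm, v4.trans vs.symm⟩
      rcases lt_or_ge i.val (2*b) with h' | h'
      · have v1 : t1 i = false := by rw [ht1]; simp only [decide_eq_false_iff_not]; omega
        have v2 : t2 i = true := by rw [ht2]; simp only [decide_eq_true_eq]; omega
        have v3 : t3 i = false := by rw [ht3]; simp only [decide_eq_false_iff_not]; omega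
        have v4 : t4 i = true := by rw [ht4]; simp only [decide_eq_true_eq]; omega
        have vs : s i = true := by rw [hs]; simp only [decide_eq_true_eq]; omega
        exact Or.inr (Or.inl ⟨v1.trans v3.symm, v2.trans vs.symm, v4.trans vs.symm⟩)
      rcases lt_or_ge i.val (a+2*b) with h'' | h''
      · have v1 : t1 i = true := by rw [ht1]; simp only [decide_eq_true_eq]; omega
        have v2 : t2 i = true := by rw [ht2]; simp only [decide_eq_true_eq]; omega
        have v3 : t3 i = true := by rw [ht3]; simp only [decide_eq_true_eq]; omega
        have vs : s i = true := by rw [hs]; simp only [decide_eq_true_eq]; omega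
        exact Or.inr (Or.inr ⟨v1.trans vs.symm, v2.trans vs.symm, v3.trans vs.symm⟩)
      · have v1 : t1 i = false := by rw [ht1]; simp only [decide_eq_false_iff_not]; omega
        have v2 : t2 i = false := by rw [ht2]; simp only [decide_eq_false_iff_not]; omega
        have v3 : t3 i = false := by rw [ht3]; simp only [decide_eq_false_iff_not]; omega
        have vs : s i = false := by rw [hs]; simp only [decide_eq_false_iff_not]; omega
        have v4 : t4 i = false := by rw [ht4]; simp only [decide_eq_false_iff_not]; omega
        exact Or.inl ⟨v1.trans v2.symm, v3.trans vs.symm, v4.trans vs.symm⟩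
  rw [hsym, ws] at hsR
  exact h2 hsR
end

section
/- Let R ⊆ {0,1}^n be a symmetric relation preserved by the partial 3-edge operation, with accepted weight set S ⊆ {0,…,n}. Then either S is a complete arithmetic progression in {0,…,n} (i.e., S = {x ∈ {0,…,n} : x ≡ a (mod p)} for some a, p, possibly of length one), or S = {a, a+b} for some a < b, or S = {n−a−b, n−a} for some a < b. -/
open Finset in
lemma exists_blocks (n : ℕ) (g : Fin 8 → ℕ) (hn : ∑ j, g j = n) :
    ∃ C : Fin n → Fin 8, ∀ j, (Finset.univ.filter fun i => C i = j).card = g j := by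
  have hcard : Fintype.card (Σ j : Fin 8, Fin (g j)) = Fintype.card (Fin n) := by
    simp [Fintype.card_sigma, hn]
  obtain e := Fintype.equivOfCardEq hcard
  refine ⟨fun i => (e.symm i).1, fun j => ?_⟩
  rw [← Fintype.card_subtype]
  have e2 : {i : Fin n // (e.symm i).1 = j} ≃ {x : Σ j' : Fin 8, Fin (g j') // x.1 = j} :=
    (Equiv.subtypeEquiv e (by intro x; simp)).symm
  have e3 : {x : Σ j' : Fin 8, Fin (g j') // x.1 = j} ≃ Fin (g j) :=
    { toFun := fun x => Fin.cast (congrArg g x.2) x.1.2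
      invFun := fun y => ⟨⟨j, y⟩, rfl⟩
      left_inv := by rintro ⟨⟨i, y⟩, rfl⟩; rfl
      right_inv := fun y => rfl }
  rw [Fintype.card_congr (e2.trans e3), Fintype.card_fin]

open Finset in
lemma hamming_blocks {n : ℕ} (C : Fin n → Fin 8) (g : Fin 8 → ℕ)
    (hfib : ∀ j, (Finset.univ.filter fun i => C i = j).card = g j) (f : Fin 8 → Bool) :
    hamming (fun i => f (C i)) = ∑ j : Fin 8, if f j then g j else 0 := by
  classical
  rw [hamming]
  rw [Finset.card_eq_sum_card_fiberwise (f := C) (t := Finset.univ) (fun x _ => mem_univ _)]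
  rw [← Finset.sum_filter_add_sum_filter_not Finset.univ (fun j => f j = true)]
  have h1 : ∀ j ∈ Finset.univ.filter (fun j => f j = true),
      ((Finset.univ.filter fun i => f (C i) = true).filter fun i => C i = j).card = g j := by
    intro j hj
    simp only [mem_filter, mem_univ, true_and] at hj
    rw [← hfib j]
    congr 1
    ext i
    simp only [mem_filter, mem_univ, true_and]
    constructor
    · rintro ⟨-, h⟩; exact h
    · intro h; exact ⟨by rw [h, hj], h⟩
  have h2 : ∀ j ∈ Finset.univ.filter (fun j => ¬ f j = true),
      ((Finset.univ.filter fun i => f (C i) = true).filter fun i => C i = j).card = 0 := by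
    intro j hj
    simp only [mem_filter, mem_univ, true_and] at hj
    rw [Finset.card_eq_zero]
    ext i
    simp only [mem_filter, mem_univ, true_and, Finset.notMem_empty, iff_false, not_and]
    intro hf hC; exact hj (by rwa [hC] at hf)
  rw [Finset.sum_congr rfl h1, Finset.sum_congr rfl h2]
  simp [Finset.sum_filter]

/-- The eight admissible column types for the 3-edge operation. -/
def colf : Fin 8 → Fin 4 → Bool :=
  ![![true,true,false,false], ![false,false,true,true], ![true,true,true,true],
    ![false,false,false,false], ![true,false,true,false], ![false,true,false,true],
    ![false,false,false,true], ![true,true,true,false]]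

/-- The value of the 3-edge operation on each admissible column type. -/
def svalf : Fin 8 → Bool := ![false,true,true,false,false,true,false,true]

lemma colf_valid : ∀ j : Fin 8, e3Col (colf j) (svalf j) := by
  unfold e3Col colf svalf
  decide

/-- The key closure property of the weight set, obtained by applying the
3-edge operation to tuples built from `g0,…,g7` columns of the eight types. -/
lemma key (n : ℕ) (S : Set ℕ) (R : Set (Fin n → Bool))
    (hsym : ∀ t, t ∈ R ↔ hamming t ∈ S) (hR : preservedByE3 n R)
    (g0 g1 g2 g3 g4 g5 g6 g7 : ℕ)
    (hn : g0+g1+g2+g3+g4+g5+g6+g7 = n)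
    (h0 : g0+g2+g4+g7 ∈ S) (h1 : g0+g2+g5+g7 ∈ S)
    (h2 : g1+g2+g4+g7 ∈ S) (h3 : g1+g2+g5+g6 ∈ S) :
    g1+g2+g5+g7 ∈ S := by
  set g : Fin 8 → ℕ := ![g0,g1,g2,g3,g4,g5,g6,g7] with hg
  have hsum : ∑ j, g j = n := by rw [Fin.sum_univ_eight]; simpa [hg] using hn
  obtain ⟨C, hfib⟩ := exists_blocks n g hsum
  have hs : (fun i => svalf (C i)) ∈ R := by
    apply hR (fun a i => colf (C i) a)
    · intro a
      rw [hsym]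
      have := hamming_blocks C g hfib (fun j => colf j a)
      rw [this]
      fin_cases a <;>
        · rw [Fin.sum_univ_eight]
          simpa [colf, hg] using (by assumption : _ ∈ S)
    · intro i
      exact colf_valid (C i)
  rw [hsym] at hs
  have := hamming_blocks C g hfib svalf
  rw [this] at hs
  rw [Fin.sum_univ_eight] at hs
  simpa [svalf, hg] using hs

section rules
variable {n : ℕ} {S : Set ℕ} {R : Set (Fin n → Bool)}
  (hSn : ∀ x ∈ S, x ≤ n) (hsym : ∀ t, t ∈ R ↔ hamming t ∈ S) (hR : preservedByE3 n R)

include hSn hsym hR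

/-- From `a, a+d ∈ S` and a witness `c ∈ S` with `a+2d ≤ c`, derive `a+2d ∈ S`. -/
lemma ruleUp {a d c : ℕ} (ha : a ∈ S) (had : a + d ∈ S) (hc : c ∈ S)
    (h2 : a + 2*d ≤ c) : a + 2*d ∈ S := by
  have hcn : c ≤ n := hSn c hc
  have h := key n S R hsym hR (a - (a+c-n)) (a+d - (a+c-n)) (a+c-n) (n - (a+c))
      0 d (c - (a+2*d)) 0 (by omega) ?_ ?_ ?_ ?_
  · have e : a+d - (a+c-n) + (a+c-n) + d + 0 = a + 2*d := by omega
    rwa [e] at h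
  · have e : a - (a+c-n) + (a+c-n) + 0 + 0 = a := by omega
    rwa [e]
  · have e : a - (a+c-n) + (a+c-n) + d + 0 = a + d := by omega
    rwa [e]
  · have e : a+d - (a+c-n) + (a+c-n) + 0 + 0 = a + d := by omega
    rwa [e]
  · have e : a+d - (a+c-n) + (a+c-n) + d + (c - (a+2*d)) = c := by omega
    rwa [e]

/-- From `b, b+d ∈ S` and a witness `c ∈ S` with `c+d ≤ b`, derive `b-d ∈ S`. -/
lemma ruleDown {b d c : ℕ} (hbd : b + d ∈ S) (hb : b ∈ S) (hc : c ∈ S)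
    (h2 : c + d ≤ b) : b - d ∈ S := by
  have hbn : b + d ≤ n := hSn _ hbd
  have h := key n S R hsym hR (c+d - (b+d+c-n)) (c - (b+d+c-n)) (b+d+c-n) (n - (b+d+c))
      d 0 0 (b - d - c) (by omega) ?_ ?_ ?_ ?_
  · have e : c - (b+d+c-n) + (b+d+c-n) + 0 + (b-d-c) = b - d := by omega
    rwa [e] at h
  · have e : c+d - (b+d+c-n) + (b+d+c-n) + d + (b-d-c) = b + d := by omega
    rwa [e]
  · have e : c+d - (b+d+c-n) + (b+d+c-n) + 0 + (b-d-c) = b := by omega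
    rwa [e]
  · have e : c - (b+d+c-n) + (b+d+c-n) + d + (b-d-c) = b := by omega
    rwa [e]
  · have e : c - (b+d+c-n) + (b+d+c-n) + 0 + 0 = c := by omega
    rwa [e]

omit hSn in
/-- Upward extension: from `a, a+d ∈ S` with `d ≤ a` and `a+2d ≤ n`, derive `a+2d ∈ S`. -/
lemma ruleUp2 {a d : ℕ} (ha : a ∈ S) (had : a + d ∈ S)
    (h1 : d ≤ a) (h2 : a + 2*d ≤ n) : a + 2*d ∈ S := by
  have h := key n S R hsym hR (a-d - (2*a+d-n)) (a - (2*a+d-n)) (2*a+d-n) (n - (2*a+d))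
      0 d 0 d (by omega) ?_ ?_ ?_ ?_
  · have e : a - (2*a+d-n) + (2*a+d-n) + d + d = a + 2*d := by omega
    rwa [e] at h
  · have e : a-d - (2*a+d-n) + (2*a+d-n) + 0 + d = a := by omega
    rwa [e]
  · have e : a-d - (2*a+d-n) + (2*a+d-n) + d + d = a + d := by omega
    rwa [e]
  · have e : a - (2*a+d-n) + (2*a+d-n) + 0 + d = a + d := by omega
    rwa [e]
  · have e : a - (2*a+d-n) + (2*a+d-n) + d + 0 = a + d := by omega
    rwa [e]

omit hSn in
/-- Downward extension: from `b, b+d ∈ S` with `d ≤ b` and `b+2d ≤ n`, derive `b-d ∈ S`. -/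
lemma ruleDown2 {b d : ℕ} (hb : b ∈ S) (hbd : b + d ∈ S)
    (h1 : d ≤ b) (h2 : b + 2*d ≤ n) : b - d ∈ S := by
  have h := key n S R hsym hR (b - (2*b+d-n)) (b-d - (2*b+d-n)) (2*b+d-n) (n - (2*b+d))
      d 0 d 0 (by omega) ?_ ?_ ?_ ?_
  · have e : b-d - (2*b+d-n) + (2*b+d-n) + 0 + 0 = b - d := by omega
    rwa [e] at h
  · have e : b - (2*b+d-n) + (2*b+d-n) + d + 0 = b + d := by omega
    rwa [e]
  · have e : b - (2*b+d-n) + (2*b+d-n) + 0 + 0 = b := by omega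
    rwa [e]
  · have e : b-d - (2*b+d-n) + (2*b+d-n) + d + 0 = b := by omega
    rwa [e]
  · have e : b-d - (2*b+d-n) + (2*b+d-n) + 0 + d = b := by omega
    rwa [e]

end rules

/-- For a symmetric relation preserved by the partial 3-edge operation, the
set `S` of accepted weights is either a complete arithmetic progression in
`{0,…,n}`, or `{a, a+b}` for some `a < b`, or `{n-a-b, n-a}` for some
`a < b`. -/
theorem stmt_10 (n : ℕ) (S : Set ℕ) (R : Set (Fin n → Bool))
    (hSn : ∀ x ∈ S, x ≤ n)
    (hsym : ∀ t, t ∈ R ↔ hamming t ∈ S)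
    (hR : preservedByE3 n R) :
    (∃ a p : ℕ, S = {x | x ≤ n ∧ x % p = a % p}) ∨
    (∃ a b : ℕ, a < b ∧ S = {a, a + b}) ∨
    (∃ a b : ℕ, a < b ∧ S = {n - a - b, n - a}) := by
  classical
  by_cases hne : ∃ x, x ∈ S
  case neg =>
    left
    refine ⟨n+1, 0, ?_⟩
    push_neg at hne
    ext x
    simp only [Set.mem_setOf_eq, Nat.mod_zero]
    constructor
    · intro hx; exact absurd hx (hne x)
    · rintro ⟨h1, h2⟩; omega
  obtain ⟨x0, hx0⟩ := hne
  by_cases hpair : ∃ u v, u ∈ S ∧ v ∈ S ∧ u < v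
  case neg =>
    left
    refine ⟨x0, 0, ?_⟩
    push_neg at hpair
    ext x
    simp only [Set.mem_setOf_eq, Nat.mod_zero]
    constructor
    · intro hx
      refine ⟨hSn x hx, ?_⟩
      have h1 := hpair x x0 hx hx0
      have h2 := hpair x0 x hx0 hx
      omega
    · rintro ⟨-, rfl⟩; exact hx0
  obtain ⟨u, v, hu, hv, huv⟩ := hpair
  have hexS : ∃ x, x ∈ S := ⟨u, hu⟩
  set m := Nat.find hexS with hm_def
  have hmS : m ∈ S := Nat.find_spec hexS
  have hmle : ∀ s ∈ S, m ≤ s := fun s hs => Nat.find_min' hexS hs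
  set M := Nat.findGreatest (· ∈ S) n with hM_def
  have hMS : M ∈ S := Nat.findGreatest_spec (hSn u hu) hu
  have hleM : ∀ s ∈ S, s ≤ M := fun s hs => Nat.le_findGreatest (hSn s hs) hs
  have hexd : ∃ d, 0 < d ∧ ∃ x, x ∈ S ∧ x + d ∈ S :=
    ⟨v - u, by omega, u, hu, by rw [show u + (v-u) = v by omega]; exact hv⟩
  set d := Nat.find hexd with hd_def
  obtain ⟨hdpos, x1, hx1, hx1d⟩ := Nat.find_spec hexd
  have hdmin : ∀ d', 0 < d' → ∀ x, x ∈ S → x + d' ∈ S → d ≤ d' :=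
    fun d' h1 x h2 h3 => Nat.find_min' hexd ⟨h1, x, h2, h3⟩
  -- the pair (m, m+d) is in S
  have pairm : m + d ∈ S := by
    have desc : ∀ x, x ∈ S → x + d ∈ S → m + d ∈ S := by
      intro x
      induction x using Nat.strong_induction_on with
      | _ x ih =>
        intro hx hxd
        by_cases hc : m + d ≤ x
        · have h1 : x - d ∈ S := ruleDown hSn hsym hR hxd hx hmS (by omega)
          have h2 : (x - d) + d ∈ S := by rw [show x - d + d = x by omega]; exact hx
          exact ih (x - d) (by omega) h1 h2
        · have hxm : m ≤ x := hmle x hx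
          have hxe : x = m := by
            by_contra hne2
            have : d ≤ x - m := hdmin (x - m) (by omega) m hmS
              (by rw [show m + (x-m) = x by omega]; exact hx)
            omega
          rw [hxe] at hxd; exact hxd
    exact desc x1 hx1 hx1d
  -- the chain upward: every AP point below M is in S
  have chain : ∀ k, m + d * k ≤ M → m + d * k ∈ S := by
    have main : ∀ k, (m + d * k ≤ M → m + d * k ∈ S) ∧
        (m + d * (k+1) ≤ M → m + d * (k+1) ∈ S) := by
      intro k
      induction k with
      | zero => exact ⟨fun _ => by simpa using hmS, fun _ => by simpa using pairm⟩
      | succ k ih =>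
        refine ⟨ih.2, fun h => ?_⟩
        have e : m + d*(k+1+1) = (m + d*k) + 2*d := by ring
        rw [e] at h ⊢
        have e2 : m + d*(k+1) = m + d*k + d := by ring
        have hk : m + d*k ≤ M := by omega
        have hk1 : m + d*(k+1) ≤ M := by omega
        have hm1 : m + d*k + d ∈ S := by rw [e2.symm]; exact ih.2 hk1
        exact ruleUp hSn hsym hR (ih.1 hk) hm1 hMS h
    exact fun k => (main k).1
  -- every element of S is on the AP
  have hap : ∀ s ∈ S, ∃ k, s = m + d * k := by
    intro s hs
    have hms : m ≤ s := hmle s hs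
    have hqr := Nat.div_add_mod (s - m) d
    have hrd : (s - m) % d < d := Nat.mod_lt _ hdpos
    by_cases hr : (s - m) % d = 0
    · exact ⟨(s - m) / d, by omega⟩
    · exfalso
      have hdq : d * ((s-m)/d) ≤ s - m := by omega
      have hsM : s ≤ M := hleM s hs
      have hq : m + d * ((s-m)/d) ∈ S := chain _ (by omega)
      have hsr : (m + d * ((s-m)/d)) + (s-m) % d ∈ S := by
        rw [show m + d * ((s-m)/d) + (s-m) % d = s by omega]; exact hs
      have := hdmin _ (by omega) _ hq hsr
      omega
  obtain ⟨kM, hkM⟩ := hap M hMS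
  have hmM : m < M := lt_of_le_of_lt (hmle u hu) (lt_of_lt_of_le huv (hleM v hv))
  have hMn : M ≤ n := hSn M hMS
  match kM, hkM with
  | 0, hkM => exact absurd hkM (by omega)
  | 1, hkM =>
    -- S = {m, m+d}
    have hSeq : ∀ s, s ∈ S ↔ (s = m ∨ s = m + d) := by
      intro s
      constructor
      · intro hs
        obtain ⟨k, hk⟩ := hap s hs
        have hsM : s ≤ M := hleM s hs
        rcases Nat.eq_zero_or_pos k with h|h
        · left; rw [h] at hk; simpa using hk
        · right
          have : d * 1 ≤ d * k := Nat.mul_le_mul_left d h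
          omega
      · rintro (rfl|rfl)
        · exact hmS
        · exact pairm
    by_cases hmd : m < d
    · right; left
      refine ⟨m, d, hmd, ?_⟩
      ext x
      simp only [Set.mem_insert_iff, Set.mem_singleton_iff]
      exact hSeq x
    · push_neg at hmd
      have hMdn : n < (m + d) + d := by
        by_contra h; push_neg at h
        have h2 := ruleUp2 hsym hR hmS pairm hmd (by omega)
        have := hleM _ h2
        omega
      right; right
      have hmdn : m + d ≤ n := hSn _ pairm
      refine ⟨n - (m+d), d, by omega, ?_⟩
      ext x
      simp only [Set.mem_insert_iff, Set.mem_singleton_iff]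
      rw [hSeq x]
      omega
  | (k2+2), hkM =>
    -- S is an AP with at least 3 elements: must be complete
    have hk2 : d * 2 ≤ d * (k2 + 2) := Nat.mul_le_mul_left d (by omega)
    have hmd : m < d := by
      by_contra h; push_neg at h
      have h2 := ruleDown2 hsym hR hmS pairm h (by omega)
      have := hmle _ h2
      omega
    have hMdn : n < M + d := by
      by_contra h; push_neg at h
      have ha : m + d * (k2+1) ∈ S := chain (k2+1)
        (by have : d * (k2+1) ≤ d * (k2+2) := Nat.mul_le_mul_left d (by omega); omega)
      have had : (m + d * (k2+1)) + d ∈ S := by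
        rw [show m + d*(k2+1) + d = m + d*(k2+2) by ring, ← hkM]; exact hMS
      have h1 : d ≤ m + d * (k2+1) := by
        have : d * 1 ≤ d * (k2+1) := Nat.mul_le_mul_left d (by omega)
        omega
      have h2 : (m + d * (k2+1)) + 2*d ≤ n := by
        have e : m + d*(k2+1) + 2*d = m + d*(k2+2) + d := by ring
        omega
      have h3 := ruleUp2 hsym hR ha had h1 h2
      have h4 := hleM _ h3
      have e : m + d*(k2+1) + 2*d = m + d*(k2+2) + d := by ring
      omega
    left
    refine ⟨m, d, ?_⟩
    ext x
    simp only [Set.mem_setOf_eq]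
    constructor
    · intro hx
      refine ⟨hSn x hx, ?_⟩
      obtain ⟨k, hk⟩ := hap x hx
      rw [hk, Nat.mul_comm, Nat.add_mul_mod_self_right]
    · rintro ⟨hxn, hxm⟩
      have hmm : m % d = m := Nat.mod_eq_of_lt hmd
      have h1 := Nat.div_add_mod x d
      have hxe : x = m + d * (x / d) := by omega
      have hle : x ≤ M := by
        by_contra hgt; push_neg at hgt
        have hkx : k2 + 2 < x / d := by
          by_contra hh; push_neg at hh
          have : d * (x/d) ≤ d * (k2+2) := Nat.mul_le_mul_left d hh
          omega
        have h5 : d * (k2+2+1) ≤ d * (x/d) := Nat.mul_le_mul_left d (by omega)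
        have e : d * (k2+2+1) = d * (k2+2) + d := by ring
        omega
      rw [hxe]
      exact chain _ (by omega)
end

section
/- Let R ⊆ {0,1}^n be defined as the zero set of a multilinear polynomial P(x₁,…,x_n) of degree at most d over a field. Then R is preserved by the partial (d+1)-universal operation u_{d+1}. -/
/-- The zero set on `{0,1}^n` of a multilinear polynomial of degree at most
`d` over a field (given by its coefficients `α I`, with `α I = 0` whenever
`|I| > d`) is preserved by the partial `(d+1)`-universal operation. -/
theorem stmt_11 {F : Type} [Field F] (n d : ℕ) (α : Finset (Fin n) → F)
    (hdeg : ∀ I : Finset (Fin n), d < I.card → α I = 0) :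
    preservedByU (d + 1) n
      {t : Fin n → Bool |
        ∑ I : Finset (Fin n), α I * ∏ i ∈ I, (if t i then (1 : F) else 0) = 0} := by
  classical
  intro t s hR hcol
  -- Skolemize the column structure
  have hx : ∀ i : Fin n, ∃ f : (Fin (d+1) → Bool) → Bool,
      (∀ w : UIdx (d+1), f w.1 = t w i) ∧ f (fun _ => false) = s i ∧
      ∃ a : Fin (d+1), ∀ v v' : Fin (d+1) → Bool, v a = v' a → f v = f v' := by
    intro i
    rcases hcol i with h | ⟨a, hA, hsf⟩ | ⟨a, hA, hst⟩
    · exact ⟨fun _ => s i, fun w => (h w).symm, rfl, 0, fun _ _ _ => rfl⟩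
    · exact ⟨fun v => v a, fun w => (hA w).symm, hsf.symm, a, fun v v' h => h⟩
    · exact ⟨fun v => !(v a), fun w => (hA w).symm, by simp [hst], a,
        fun v v' h => by simp only [h]⟩
  choose f hf hf0 a ha using hx
  -- the monomials and the sign function
  set m : Finset (Fin n) → (Fin (d+1) → Bool) → F :=
    fun I v => ∏ i ∈ I, (if f i v then (1 : F) else 0) with hm
  set sgn : (Fin (d+1) → Bool) → F :=
    fun v => ∏ j : Fin (d+1), (if v j then (-1 : F) else 1) with hsgn
  have hG : ∀ w : UIdx (d+1), ∑ I : Finset (Fin n), α I * m I w.1 = 0 := by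
    intro w
    have := hR w
    simp only [Set.mem_setOf_eq] at this
    calc ∑ I : Finset (Fin n), α I * m I w.1
        = ∑ I : Finset (Fin n), α I * ∏ i ∈ I, (if t w i then (1 : F) else 0) := by
          refine Finset.sum_congr rfl fun I _ => ?_
          simp only [hm]
          rw [Finset.prod_congr rfl fun i _ => by rw [hf i w]]
      _ = 0 := this
  -- key vanishing sum for each monomial of degree ≤ d
  have hkey : ∀ I : Finset (Fin n),
      α I * ∑ v : Fin (d+1) → Bool, sgn v * m I v = 0 := by
    intro I
    by_cases hc : d < I.card
    · rw [hdeg I hc, zero_mul]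
    push_neg at hc
    -- find a coordinate not used by the monomial
    have hcard : (I.image a).card < Fintype.card (Fin (d+1)) := by
      have := Finset.card_image_le (s := I) (f := a)
      simp only [Fintype.card_fin]
      omega
    obtain ⟨b, hb⟩ : ∃ b : Fin (d+1), b ∉ I.image a := by
      by_contra hall
      push_neg at hall
      have : (Finset.univ : Finset (Fin (d+1))) ⊆ I.image a := fun x _ => hall x
      have := Finset.card_le_card this
      simp only [Finset.card_univ] at this
      omega
    have hsum : ∑ v : Fin (d+1) → Bool, sgn v * m I v = 0 := by
      refine Finset.sum_ninvolution (fun v => Function.update v b (!(v b))) ?_ ?_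
        (fun _ => Finset.mem_univ _) ?_
      · intro v
        have hmm : m I (Function.update v b (!(v b))) = m I v := by
          refine Finset.prod_congr rfl fun i hi => ?_
          have hab : a i ≠ b := by
            intro h; exact hb (h ▸ Finset.mem_image_of_mem a hi)
          rw [ha i _ v (by rw [Function.update_of_ne hab])]
        have hss : sgn (Function.update v b (!(v b))) = -sgn v := by
          simp only [hsgn]
          rw [← Finset.mul_prod_erase _ _ (Finset.mem_univ b),
            ← Finset.mul_prod_erase _ (fun j => if v j then (-1:F) else 1)
              (Finset.mem_univ b)]
          have : ∀ j ∈ Finset.univ.erase b,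
              (if Function.update v b (!(v b)) j then (-1:F) else 1)
                = (if v j then (-1:F) else 1) := by
            intro j hj
            rw [Function.update_of_ne (Finset.ne_of_mem_erase hj)]
          rw [Finset.prod_congr rfl this, Function.update_self]
          cases v b <;> simp
        rw [hmm, hss]; ring
      · intro v _
        intro h
        have := congrFun h b
        simp only [Function.update_self] at this
        cases v b <;> simp at this
      · intro v
        funext j
        by_cases hj : j = b
        · subst hj; simp
        · simp [Function.update_of_ne hj]
    rw [hsum, mul_zero]
  -- put everything together
  have hswap : ∑ v : Fin (d+1) → Bool, sgn v * (∑ I : Finset (Fin n), α I * m I v)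
      = ∑ I : Finset (Fin n), α I * ∑ v : Fin (d+1) → Bool, sgn v * m I v := by
    calc ∑ v : Fin (d+1) → Bool, sgn v * (∑ I : Finset (Fin n), α I * m I v)
        = ∑ v : Fin (d+1) → Bool, ∑ I : Finset (Fin n), α I * (sgn v * m I v) := by
          refine Finset.sum_congr rfl fun v _ => ?_
          rw [Finset.mul_sum]
          exact Finset.sum_congr rfl fun I _ => by ring
      _ = ∑ I : Finset (Fin n), ∑ v : Fin (d+1) → Bool, α I * (sgn v * m I v) :=
          Finset.sum_comm
      _ = ∑ I : Finset (Fin n), α I * ∑ v : Fin (d+1) → Bool, sgn v * m I v := by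
          refine Finset.sum_congr rfl fun I _ => (Finset.mul_sum _ _ _).symm
  have hzero : ∑ v : Fin (d+1) → Bool, sgn v * (∑ I : Finset (Fin n), α I * m I v) = 0 := by
    rw [hswap]
    exact Finset.sum_eq_zero fun I _ => hkey I
  have hsingle : ∑ v : Fin (d+1) → Bool, sgn v * (∑ I : Finset (Fin n), α I * m I v)
      = ∑ I : Finset (Fin n), α I * m I (fun _ => false) := by
    rw [Fintype.sum_eq_single (fun _ => false)]
    · have : sgn (fun _ => false) = 1 := by simp [hsgn]
      rw [this, one_mul]
    · intro v hv
      rw [hG ⟨v, hv⟩, mul_zero]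
  have hG0 : ∑ I : Finset (Fin n), α I * m I (fun _ => false) = 0 := by
    rw [← hsingle, hzero]
  simp only [Set.mem_setOf_eq]
  calc ∑ I : Finset (Fin n), α I * ∏ i ∈ I, (if s i then (1:F) else 0)
      = ∑ I : Finset (Fin n), α I * m I (fun _ => false) := by
        refine Finset.sum_congr rfl fun I _ => ?_
        simp only [hm]
        rw [Finset.prod_congr rfl fun i _ => by rw [← hf0 i]]
    _ = 0 := hG0
end

section
/- If a sign-symmetric Boolean constraint language Γ contains a relation R not preserved by the partial k-universal operation u_k, then Γ can qfpp-define the k-clause relation {0,1}^k \ {0^k}: there is a relation in Γ from which, by identifying arguments (according to equality of columns among the witnessing tuples) and substituting constants, one obtains exactly {0,1}^k \ {0^k}. -/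
/-- If a sign-symmetric Boolean constraint language `Γ` (closed under
negating argument positions and fixing arguments to constants) contains a
relation not preserved by the partial `k`-universal operation, then `Γ` can
qfpp-define the `k`-clause relation `{0,1}^k \ {0^k}`: some relation of `Γ`,
after identifying arguments and substituting constants (given by a map
`h : Fin m' → Fin k ⊕ Bool`), becomes exactly `{0,1}^k \ {0^k}`. -/
theorem stmt_13 (k : ℕ) (hk : 2 ≤ k)
    (Γ : ∀ m : ℕ, Set (Set (Fin m → Bool)))
    (hsign : ∀ m, ∀ R ∈ Γ m, ∀ σ : Fin m → Bool,
      {t : Fin m → Bool | (fun i => xor (t i) (σ i)) ∈ R} ∈ Γ m)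
    (hfix : ∀ m, ∀ R ∈ Γ m, ∀ i : Fin m, ∀ c : Bool,
      {t : Fin m → Bool | t ∈ R ∧ t i = c} ∈ Γ m)
    (m : ℕ) (R : Set (Fin m → Bool)) (hRΓ : R ∈ Γ m)
    (hR : ¬ preservedByU k m R) :
    ∃ m' : ℕ, ∃ R' ∈ Γ m', ∃ h : Fin m' → Fin k ⊕ Bool,
      {u : Fin k → Bool | (fun i => Sum.elim u id (h i)) ∈ R'} =
        {u : Fin k → Bool | u ≠ fun _ => false} := by
  rw [preservedByU] at hR
  push_neg at hR
  obtain ⟨t, s, ht, hcol, hs⟩ := hR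
  have hp : ∀ i, ∃ p : (Fin k ⊕ Bool) × Bool,
      (∀ v : UIdx k, t v i = xor (Sum.elim v.1 id p.1) p.2) ∧
      s i = xor (Sum.elim (fun _ => false) id p.1) p.2 := by
    intro i
    rcases hcol i with h1 | ⟨a, ha, hb⟩ | ⟨a, ha, hb⟩
    · exact ⟨(Sum.inr (s i), false), fun v => by simp [h1 v], by simp⟩
    · exact ⟨(Sum.inl a, false), fun v => by simp [ha v], by simp [hb]⟩
    · exact ⟨(Sum.inl a, true), fun v => by simp [ha v], by simp [hb]⟩
  choose p hp1 hp2 using hp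
  refine ⟨m, {t : Fin m → Bool | (fun i => xor (t i) ((p i).2)) ∈ R},
    hsign m R hRΓ _, fun i => (p i).1, ?_⟩
  ext u
  simp only [Set.mem_setOf_eq]
  constructor
  · intro hmem hue
    apply hs
    have heq : (fun i => xor (Sum.elim u id ((p i).1)) ((p i).2)) = s := by
      funext i
      rw [hue]
      exact (hp2 i).symm
    rwa [heq] at hmem
  · intro hu
    have heq : (fun i => xor (Sum.elim u id ((p i).1)) ((p i).2)) = t ⟨u, hu⟩ := by
      funext i
      exact (hp1 i ⟨u, hu⟩).symm
    show (fun i => xor (Sum.elim u id ((p i).1)) ((p i).2)) ∈ R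
    rw [heq]
    exact ht ⟨u, hu⟩
end

section
/- Let k ≥ 3 and let f be a minimal non-trivial Boolean pSDI-operation with |dom(f)| = 2k+2. Then f has k arguments j₁,…,j_k such that the restriction of every domain tuple to these positions exhibits the partial k-NU pattern: for the k non-constant tuples t₁,…,t_k ∈ dom(f) with f(t_i) = 0, we have t_a[j_i] ≠ 0 if and only if a = i, and f is an argument padding of the partial k-NU operation. -/
/-- `nuDomVal v x`: the tuple `v ∈ {0,1}^k` is in the domain of the partial
`k`-NU operation with value `x`, i.e. all but at most one coordinate of `v`
equals `x`. -/
def nuDomVal {k : ℕ} (v : Fin k → Bool) (x : Bool) : Prop :=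
  ∃ j : Fin k, ∀ b, b ≠ j → v b = x

/-- Every minimal non-trivial pSDI-operation `f` (given by `dom` and `val`)
with `|dom f| = 2k+2`, `k ≥ 3`, is an argument padding of the partial `k`-NU
operation: there are `k` non-constant tuples `t a ∈ dom` with value `false`
(which together with their complements and the constants exhaust `dom`) and
`k` argument positions `j b` such that `t a (j b) ≠ false ↔ a = b`, the
restriction of each domain tuple to the positions `j` is in the domain of
`near_k` with the same value, and every `near_k`-domain tuple arises as such
a restriction. -/
theorem stmt_15 (k r : ℕ) (hk : 3 ≤ k)
    (dom : Set (Fin r → Bool)) (val : (Fin r → Bool) → Bool)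
    (hsd : ∀ w ∈ dom, (fun i => !(w i)) ∈ dom ∧
      val (fun i => !(w i)) = !(val w))
    (hid : ∀ c : Bool, (fun _ => c) ∈ dom ∧ val (fun _ => c) = c)
    (hcard : dom.ncard = 2 * k + 2)
    (hnontriv : ¬ ∃ i : Fin r, ∀ w ∈ dom, val w = w i)
    (hmin : ∀ dom' : Set (Fin r → Bool), dom' ⊂ dom →
      (∀ w ∈ dom', (fun i => !(w i)) ∈ dom') →
      (∀ c : Bool, (fun _ => c) ∈ dom') →
      ∃ i : Fin r, ∀ w ∈ dom', val w = w i) :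
    ∃ (t : Fin k → (Fin r → Bool)) (j : Fin k → Fin r),
      Function.Injective j ∧
      (∀ a, t a ∈ dom ∧ val (t a) = false ∧ ¬ ∃ c : Bool, t a = fun _ => c) ∧
      (∀ w ∈ dom, (∃ c : Bool, w = fun _ => c) ∨ (∃ a, w = t a) ∨
        (∃ a, w = fun i => !(t a i))) ∧
      (∀ a b : Fin k, t a (j b) ≠ false ↔ a = b) ∧
      (∀ w ∈ dom, nuDomVal (fun b => w (j b)) (val w)) ∧
      (∀ (v : Fin k → Bool) (x : Bool), nuDomVal v x →
        ∃ w ∈ dom, (∀ b, w (j b) = v b) ∧ val w = x) := by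
  classical
  set neg : (Fin r → Bool) → (Fin r → Bool) := fun w i => !(w i) with hnegdef
  have hneg_invol : ∀ w, neg (neg w) = w := by
    intro w; funext i; simp [neg]
  have hneg_inj : Function.Injective neg := fun w w' h => by
    rw [← hneg_invol w, h, hneg_invol]
  -- r is positive
  have hr : 0 < r := by
    by_contra h
    have h0 : r = 0 := by omega
    subst h0
    have hle : dom.ncard ≤ Fintype.card (Fin 0 → Bool) := by
      simpa [Set.ncard_univ, Nat.card_eq_fintype_card] using
        Set.ncard_le_ncard (Set.subset_univ dom) Set.finite_univ
    simp [hcard] at hle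
  have hne : (fun _ : Fin r => false) ≠ (fun _ : Fin r => true) := by
    intro h
    simpa using congrFun h ⟨0, hr⟩
  -- negation of a nonconstant tuple is nonconstant
  have hnegnc : ∀ w : Fin r → Bool, (¬ ∃ c : Bool, w = fun _ => c) →
      ¬ ∃ c : Bool, neg w = fun _ => c := by
    rintro w hnc ⟨c, hc⟩
    exact hnc ⟨!c, by rw [← hneg_invol w, hc]; try (funext i; simp [neg])⟩
  -- the set of nonconstant false-valued tuples
  set S : Set (Fin r → Bool) :=
    {w | w ∈ dom ∧ val w = false ∧ ¬ ∃ c : Bool, w = fun _ => c} with hSdef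
  have hSsub : S ⊆ dom := fun w hw => hw.1
  have hnegS : ∀ w ∈ dom, val w = true → (¬ ∃ c : Bool, w = fun _ => c) →
      neg w ∈ S := by
    intro w hw hv hnc
    obtain ⟨h1, h2⟩ := hsd w hw
    exact ⟨h1, by simp [neg, h2, hv], hnegnc w hnc⟩
  have htri : ∀ w ∈ dom, (∃ c : Bool, w = fun _ => c) ∨ w ∈ S ∨ w ∈ neg '' S := by
    intro w hw
    by_cases hnc : ∃ c : Bool, w = fun _ => c
    · exact Or.inl hnc
    · cases hv : val w with
      | false => exact Or.inr (Or.inl ⟨hw, hv, hnc⟩)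
      | true =>
        refine Or.inr (Or.inr ⟨neg w, hnegS w hw hv hnc, hneg_invol w⟩)
  -- cardinality of S
  have hSfin : S.Finite := Set.toFinite _
  have hdomfin : dom.Finite := Set.toFinite _
  have hdomeq : dom =
      ({fun _ => false, fun _ => true} : Set (Fin r → Bool)) ∪ (S ∪ neg '' S) := by
    ext w
    constructor
    · intro hw
      rcases htri w hw with ⟨c, rfl⟩ | h | h
      · cases c
        · exact Or.inl (Or.inl rfl)
        · exact Or.inl (Or.inr rfl)
      · exact Or.inr (Or.inl h)
      · exact Or.inr (Or.inr h)
    · rintro (h | h | ⟨s, hs, rfl⟩)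
      · rcases h with h | h
        · exact h ▸ (hid false).1
        · exact h ▸ (hid true).1
      · exact hSsub h
      · exact (hsd s (hSsub hs)).1
  have hdisj2 : Disjoint S (neg '' S) := by
    rw [Set.disjoint_left]
    rintro w ⟨_, hv, _⟩ ⟨s, hs, rfl⟩
    have := (hsd s (hSsub hs)).2
    rw [hs.2.1] at this
    simp only [neg] at hv
    rw [hv] at this
    simp at this
  have hdisj1 : Disjoint ({fun _ => false, fun _ => true} : Set (Fin r → Bool))
      (S ∪ neg '' S) := by
    rw [Set.disjoint_left]
    rintro w hw hw2
    have hc : ∃ c : Bool, w = fun _ => c := by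
      rcases hw with h | h
      · exact ⟨false, h⟩
      · exact ⟨true, h⟩
    rcases hw2 with h | ⟨s, hs, rfl⟩
    · exact h.2.2 hc
    · exact hnegnc s hs.2.2 hc
  have hcardS : S.ncard = k := by
    have h1 : dom.ncard = 2 + (S ∪ neg '' S).ncard := by
      rw [hdomeq, Set.ncard_union_eq hdisj1 (Set.toFinite _) (Set.toFinite _),
        Set.ncard_pair hne]
    have h2 : (S ∪ neg '' S).ncard = S.ncard + S.ncard := by
      rw [Set.ncard_union_eq hdisj2 hSfin (Set.toFinite _),
        Set.ncard_image_of_injective S hneg_inj]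
    rw [hcard] at h1
    omega
  -- enumerate S
  have hcardS' : hSfin.toFinset.card = k := by
    rw [← Set.ncard_eq_toFinset_card S hSfin]; exact hcardS
  set e : Fin k ≃ hSfin.toFinset := (hSfin.toFinset.equivFinOfCardEq hcardS').symm
    with hedef
  set t : Fin k → (Fin r → Bool) := fun a => (e a : Fin r → Bool) with htdef
  have htS : ∀ a, t a ∈ S := fun a => hSfin.mem_toFinset.mp (e a).2
  have htinj : Function.Injective t := fun a b h =>
    e.injective (Subtype.ext h)
  have htsurj : ∀ w ∈ S, ∃ a, t a = w := by
    intro w hw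
    exact ⟨e.symm ⟨w, hSfin.mem_toFinset.mpr hw⟩, by simp [t]⟩
  -- value of complements of t a
  have hvalneg : ∀ a, val (neg (t a)) = true := by
    intro a
    have := (hsd (t a) (hSsub (htS a))).2
    rw [(htS a).2.1] at this
    simpa [neg] using this
  -- the key positions
  have hj : ∀ a : Fin k, ∃ i : Fin r, t a i = true ∧ ∀ b, b ≠ a → t b i = false := by
    intro a
    set dom' : Set (Fin r → Bool) := dom \ {t a, neg (t a)} with hdom'
    have hta : t a ∉ dom' := by simp [dom']
    have hss : dom' ⊂ dom :=
      (Set.ssubset_iff_of_subset Set.diff_subset).2 ⟨t a, hSsub (htS a), hta⟩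
    have hclosed : ∀ w ∈ dom', (fun i => !(w i)) ∈ dom' := by
      rintro w ⟨hw, hw2⟩
      refine ⟨(hsd w hw).1, ?_⟩
      rintro (h | h)
      · exact hw2 (Or.inr (by rw [← hneg_invol w]; exact congrArg neg h))
      · exact hw2 (Or.inl (hneg_inj h))
    have hconst : ∀ c : Bool, (fun _ => c) ∈ dom' := by
      intro c
      refine ⟨(hid c).1, ?_⟩
      rintro (h | h)
      · exact (htS a).2.2 ⟨c, h.symm⟩
      · exact hnegnc (t a) (htS a).2.2 ⟨c, h.symm⟩
    obtain ⟨i, hi⟩ := hmin dom' hss hclosed hconst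
    push_neg at hnontriv
    obtain ⟨w0, hw0, hw0v⟩ := hnontriv i
    have hw0' : w0 = t a ∨ w0 = neg (t a) := by
      by_contra h
      push_neg at h
      exact hw0v (hi w0 ⟨hw0, by rintro (h'|h') <;> [exact h.1 h'; exact h.2 h']⟩)
    have hti : t a i = true := by
      rcases hw0' with h | h
      · subst h
        rw [(htS a).2.1] at hw0v
        simpa using hw0v.symm
      · subst h
        rw [hvalneg a] at hw0v
        simp only [neg] at hw0v
        cases h' : t a i
        · rw [h'] at hw0v; simp at hw0v
        · rfl
    refine ⟨i, hti, ?_⟩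
    intro b hb
    have hbmem : t b ∈ dom' := by
      refine ⟨hSsub (htS b), ?_⟩
      rintro (h | h)
      · exact hb (htinj h)
      · have := (htS b).2.1
        rw [h, hvalneg a] at this
        simp at this
    have := hi (t b) hbmem
    rw [(htS b).2.1] at this
    exact this.symm
  choose j hj1 hj2 using hj
  -- hj1 a : t a (j a) = true ; hj2 a b (hb : b ≠ a) : t b (j a) = false
  have hjinj : Function.Injective j := by
    intro a b h
    by_contra hab
    have h1 := hj1 a
    rw [h] at h1
    rw [hj2 b a hab] at h1
    exact Bool.false_ne_true h1
  refine ⟨t, j, hjinj, ?_, ?_, ?_, ?_, ?_⟩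
  · intro a
    exact ⟨hSsub (htS a), (htS a).2.1, (htS a).2.2⟩
  · intro w hw
    rcases htri w hw with h | h | ⟨s, hs, rfl⟩
    · exact Or.inl h
    · obtain ⟨a, ha⟩ := htsurj w h
      exact Or.inr (Or.inl ⟨a, ha.symm⟩)
    · obtain ⟨a, ha⟩ := htsurj s hs
      exact Or.inr (Or.inr ⟨a, by rw [← ha]⟩)
  · intro a b
    constructor
    · intro h
      by_contra hab
      exact h (hj2 b a hab)
    · rintro rfl
      rw [hj1 a]
      simp
  · intro w hw
    rcases htri w hw with ⟨c, rfl⟩ | h | ⟨s, hs, rfl⟩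
    · refine ⟨⟨0, by omega⟩, fun b _ => ?_⟩
      show c = val (fun _ => c)
      exact ((hid c).2).symm
    · obtain ⟨a, rfl⟩ := htsurj w h
      refine ⟨a, fun b hb => ?_⟩
      show t a (j b) = val (t a)
      rw [(htS a).2.1]
      exact hj2 b a (Ne.symm hb)
    · obtain ⟨a, rfl⟩ := htsurj s hs
      refine ⟨a, fun b hb => ?_⟩
      show (!(t a (j b))) = val (neg (t a))
      simp [hj2 b a (Ne.symm hb), hvalneg a]
  · rintro v x ⟨j0, hv⟩
    by_cases h0 : v j0 = x
    · refine ⟨fun _ => x, (hid x).1, fun b => ?_, (hid x).2⟩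
      by_cases hb : b = j0
      · rw [hb, h0]
      · rw [hv b hb]
    · have h0' : v j0 = !x := by
        revert h0; cases v j0 <;> cases x <;> simp
      cases x with
      | false =>
        refine ⟨t j0, hSsub (htS j0), fun b => ?_, (htS j0).2.1⟩
        by_cases hb : b = j0
        · subst hb; simp [hj1 b, h0']
        · simp [hj2 b j0 (fun h => hb h.symm), hv b hb]
      | true =>
        refine ⟨fun i => !(t j0 i), (hsd (t j0) (hSsub (htS j0))).1, fun b => ?_, ?_⟩
        · show (!(t j0 (j b))) = v b
          by_cases hb : b = j0
          · subst hb; simp [hj1 b, h0']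
          · simp [hj2 b j0 (fun h => hb h.symm), hv b hb]
        · have := (hsd (t j0) (hSsub (htS j0))).2
          rw [(htS j0).2.1] at this
          simpa using this
end

section
/- Let t₁,t₂,t₃ ∈ {0,1}^n be such that the partial Maltsev operation applies non-projectively, i.e., every column (t₁[i],t₂[i],t₃[i]) is of the form (x,x,y) or (y,x,x), and both the set I = {i : t₁[i]=t₂[i]≠t₃[i]} and the set J = {i : t₁[i]≠t₂[i]=t₃[i]} are nonempty. If S ⊆ [n] is chosen uniformly at random and y(t) = ⊕_{i∈S} t[i], then the probability that the triple (y(t₁), y(t₂), y(t₃)) lies in the domain of the partial Maltsev operation is exactly 3/4. -/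
/-- The parity bit `⊕_{i ∈ S} t i` of a Boolean tuple over an index set `S`. -/
def parityBit {n : ℕ} (S : Finset (Fin n)) (t : Fin n → Bool) : Bool :=
  decide ((S.filter fun i => t i = true).card % 2 = 1)

/-- Toggle the membership of `a` in `S`. -/
def toggle {n : ℕ} (a : Fin n) (S : Finset (Fin n)) : Finset (Fin n) :=
  if a ∈ S then S.erase a else insert a S

lemma toggle_toggle {n : ℕ} (a : Fin n) (S : Finset (Fin n)) : toggle a (toggle a S) = S := by
  unfold toggle
  by_cases h : a ∈ S
  · simp [h, Finset.insert_erase]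
  · simp [h, Finset.erase_insert]

lemma parity_toggle {n : ℕ} (a : Fin n) (S : Finset (Fin n)) (t : Fin n → Bool) :
    parityBit (toggle a S) t = xor (t a) (parityBit S t) := by
  unfold toggle parityBit
  by_cases h : a ∈ S
  · rw [if_pos h, Finset.filter_erase]
    by_cases ht : t a = true
    · have ha : a ∈ S.filter fun i => t i = true := Finset.mem_filter.2 ⟨h, ht⟩
      rw [Finset.card_erase_of_mem ha, ht]
      have hk : 1 ≤ (S.filter fun i => t i = true).card := Finset.card_pos.2 ⟨a, ha⟩
      simp only [Bool.true_xor, ← decide_not]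
      exact decide_eq_decide.2 (by omega)
    · rw [Finset.erase_eq_of_notMem (by simp [ht]), Bool.of_not_eq_true ht]
      simp
  · rw [if_neg h, Finset.filter_insert]
    by_cases ht : t a = true
    · rw [if_pos ht, Finset.card_insert_of_notMem (by simp [h]), ht]
      simp only [Bool.true_xor, ← decide_not]
      exact decide_eq_decide.2 (by omega)
    · rw [if_neg ht, Bool.of_not_eq_true ht]
      simp

lemma card_toggle_bij {n : ℕ} (a : Fin n) (p q : Finset (Fin n) → Prop)
    [DecidablePred p] [DecidablePred q] (h : ∀ S, p S ↔ q (toggle a S)) :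
    (Finset.univ.filter p).card = (Finset.univ.filter q).card := by
  apply Finset.card_bij' (fun S _ => toggle a S) (fun T _ => toggle a T)
  · intro S hS
    simp only [Finset.mem_filter, Finset.mem_univ, true_and] at *
    exact (h S).1 hS
  · intro T hT
    simp only [Finset.mem_filter, Finset.mem_univ, true_and] at *
    exact (h (toggle a T)).2 (by rwa [toggle_toggle])
  · intro S _; exact toggle_toggle a S
  · intro T _; exact toggle_toggle a T

/-- If the partial Maltsev operation applies non-projectively to
`t₁, t₂, t₃ ∈ {0,1}^n` (every column is of the form `(x,x,y)` or `(y,x,x)`,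
and both deviation sets are nonempty), then the number of sets `S ⊆ [n]` for
which the parity bits `(y(t₁), y(t₂), y(t₃))` form a triple in the Maltsev
domain is exactly `(3/4)·2^n`. -/
theorem stmt_17 (n : ℕ) (t₁ t₂ t₃ : Fin n → Bool)
    (hcol : ∀ i, t₁ i = t₂ i ∨ t₂ i = t₃ i)
    (hI : ∃ i, t₁ i = t₂ i ∧ t₂ i ≠ t₃ i)
    (hJ : ∃ i, t₁ i ≠ t₂ i ∧ t₂ i = t₃ i) :
    4 * (Finset.univ.filter fun S : Finset (Fin n) =>
        parityBit S t₁ = parityBit S t₂ ∨ parityBit S t₂ = parityBit S t₃).card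
      = 3 * 2 ^ n := by
  obtain ⟨b, hb1, hb2⟩ := hI
  obtain ⟨a, ha1, ha2⟩ := hJ
  set P : Finset (Fin n) → Prop := fun S => parityBit S t₁ = parityBit S t₂ with hP
  set Q : Finset (Fin n) → Prop := fun S => parityBit S t₂ = parityBit S t₃ with hQ
  -- toggling `a` flips P and preserves Q
  have flipa : ∀ S, (P (toggle a S) ↔ ¬ P S) ∧ (Q (toggle a S) ↔ Q S) := by
    intro S
    simp only [hP, hQ, parity_toggle]
    revert ha1 ha2
    generalize t₁ a = x1; generalize t₂ a = x2; generalize t₃ a = x3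
    generalize parityBit S t₁ = y1; generalize parityBit S t₂ = y2
    generalize parityBit S t₃ = y3
    revert x1 x2 x3 y1 y2 y3; decide
  -- toggling `b` preserves P and flips Q
  have flipb : ∀ S, (P (toggle b S) ↔ P S) ∧ (Q (toggle b S) ↔ ¬ Q S) := by
    intro S
    simp only [hP, hQ, parity_toggle]
    revert hb1 hb2
    generalize t₁ b = x1; generalize t₂ b = x2; generalize t₃ b = x3
    generalize parityBit S t₁ = y1; generalize parityBit S t₂ = y2
    generalize parityBit S t₃ = y3
    revert x1 x2 x3 y1 y2 y3; decide
  -- the four cells of the partition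
  have e1 : (Finset.univ.filter fun S => ¬ P S ∧ ¬ Q S).card
      = (Finset.univ.filter fun S => P S ∧ ¬ Q S).card := by
    apply card_toggle_bij a
    intro S
    rw [(flipa S).1, (flipa S).2]
  have e2 : (Finset.univ.filter fun S => ¬ P S ∧ ¬ Q S).card
      = (Finset.univ.filter fun S => ¬ P S ∧ Q S).card := by
    apply card_toggle_bij b
    intro S
    rw [(flipb S).1, (flipb S).2]
  have e3 : (Finset.univ.filter fun S => P S ∧ ¬ Q S).card
      = (Finset.univ.filter fun S => P S ∧ Q S).card := by
    apply card_toggle_bij b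
    intro S
    have h := flipb S; tauto
  -- splitting the cube
  have s1 : (Finset.univ.filter fun S : Finset (Fin n) => P S).card
      + (Finset.univ.filter fun S : Finset (Fin n) => ¬ P S).card = 2 ^ n := by
    rw [Finset.card_filter_add_card_filter_not, Finset.card_univ,
      Fintype.card_finset, Fintype.card_fin]
  have s2 : ((Finset.univ.filter fun S : Finset (Fin n) => P S).filter
        fun S => Q S).card
      + ((Finset.univ.filter fun S : Finset (Fin n) => P S).filter
        fun S => ¬ Q S).card
      = (Finset.univ.filter fun S : Finset (Fin n) => P S).card :=
    Finset.card_filter_add_card_filter_not _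
  have s3 : ((Finset.univ.filter fun S : Finset (Fin n) => ¬ P S).filter
        fun S => Q S).card
      + ((Finset.univ.filter fun S : Finset (Fin n) => ¬ P S).filter
        fun S => ¬ Q S).card
      = (Finset.univ.filter fun S : Finset (Fin n) => ¬ P S).card :=
    Finset.card_filter_add_card_filter_not _
  rw [Finset.filter_filter, Finset.filter_filter] at s2 s3
  have s4 : (Finset.univ.filter fun S : Finset (Fin n) => P S ∨ Q S).card
      + (Finset.univ.filter fun S : Finset (Fin n) => ¬ (P S ∨ Q S)).card = 2 ^ n := by
    rw [Finset.card_filter_add_card_filter_not, Finset.card_univ,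
      Fintype.card_finset, Fintype.card_fin]
  have s5 : (Finset.univ.filter fun S : Finset (Fin n) => ¬ (P S ∨ Q S))
      = (Finset.univ.filter fun S : Finset (Fin n) => ¬ P S ∧ ¬ Q S) := by
    apply Finset.filter_congr
    intro S _
    push_neg
    rfl
  rw [s5] at s4
  have goalpred : (Finset.univ.filter fun S : Finset (Fin n) =>
        parityBit S t₁ = parityBit S t₂ ∨ parityBit S t₂ = parityBit S t₃)
      = (Finset.univ.filter fun S : Finset (Fin n) => P S ∨ Q S) := rfl
  rw [goalpred]
  omega
end

section
/- Let k ≥ 4 and let t₁,…,t_k ∈ {0,1}^n be such that the partial k-NU operation applies non-projectively with result t: there are k nonempty pairwise disjoint sets I₁,…,I_k ⊆ [n] such that t_i[j] ≠ t[j] iff j ∈ I_i. If S ⊆ [n] is chosen uniformly at random and y(u) = ⊕_{i∈S} u[i], then the probability that the column (y(t₁),…,y(t_k)) lies in the domain of the partial k-NU operation is exactly (2k+2)/2^k. -/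
/-!
Since `t_a` differs from `t` exactly on `I_a`, the parity of `t_a` on `S` is the parity of `t`
on `S` xor the parity of `|S ∩ I_a|`. Flipping every coordinate of a column does not affect
membership in the NU domain, so only the vector of block parities `(|S ∩ I_a| mod 2)_a` matters.
As the blocks are nonempty and disjoint, `S ↦ S ∆ D` shifts this vector by an arbitrary
prescribed vector, so it is uniformly distributed on `{0,1}^k`; and for `k ≥ 3` there are exactly
`2k + 2` near-unanimous vectors in `{0,1}^k`.
-/

open Finset
open scoped symmDiff

lemma Bool.eq_xor_decide_of_ne_iff {b c : Bool} {p : Prop} [Decidable p] (h : b ≠ c ↔ p) :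
    b = (c ^^ decide p) := by
  by_cases hp : p <;> cases b <;> cases c <;> simp_all

lemma Bool.xor_left_involutive (c : Bool) : Function.Involutive (c ^^ ·) := fun b => by
  simp

lemma Finset.bodd_card_symmDiff {α : Type*} [DecidableEq α] (A B : Finset α) :
    (#(A ∆ B)).bodd = ((#A).bodd ^^ (#B).bodd) := by
  have hsplit : #(A ∆ B) + 2 * #(A ∩ B) = #A + #B := by
    rw [symmDiff_def, sup_eq_union, card_union_of_disjoint disjoint_sdiff_sdiff,
      ← card_sdiff_add_card_inter A B, ← card_sdiff_add_card_inter B A, inter_comm B A]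
    ring
  rw [← Nat.bodd_add, ← hsplit, Nat.bodd_add, Nat.bodd_mul]
  simp

lemma parityBit_eq_bodd {n : ℕ} (S : Finset (Fin n)) (u : Fin n → Bool) :
    parityBit S u = (#(S.filter (u · = true))).bodd := by
  rw [parityBit, Nat.mod_two_of_bodd]
  cases (#(S.filter (u · = true))).bodd <;> rfl

lemma parityBit_symmDiff {n : ℕ} (S D : Finset (Fin n)) (u : Fin n → Bool) :
    parityBit (S ∆ D) u = (parityBit S u ^^ parityBit D u) := by
  have : (S ∆ D).filter (u · = true) = S.filter (u · = true) ∆ D.filter (u · = true) := by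
    ext j
    simp only [mem_filter, mem_symmDiff]
    tauto
  simp only [parityBit_eq_bodd, this, bodd_card_symmDiff]

lemma parityBit_xor {n : ℕ} (S : Finset (Fin n)) (u w : Fin n → Bool) :
    parityBit S (fun j => u j ^^ w j) = (parityBit S u ^^ parityBit S w) := by
  have : S.filter (fun j => (u j ^^ w j) = true) =
      S.filter (u · = true) ∆ S.filter (w · = true) := by
    ext j
    simp only [mem_filter, mem_symmDiff]
    cases u j <;> cases w j <;> simp
  simp only [parityBit_eq_bodd, this, bodd_card_symmDiff]

/-- The domain of the partial NU operation, for columns indexed by `ι`. -/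
def IsNearUnanimous {ι α : Type*} (v : ι → α) : Prop :=
  ∃ (x : α) (j : ι), ∀ a, a ≠ j → v a = x

instance {ι α : Type*} [Fintype ι] [DecidableEq ι] [Fintype α] [DecidableEq α] :
    DecidablePred (IsNearUnanimous : (ι → α) → Prop) :=
  fun v => inferInstanceAs (Decidable (∃ (x : α) (j : ι), ∀ a, a ≠ j → v a = x))

lemma isNearUnanimous_comp_iff {ι α β : Type*} {f : α → β} (hf : Function.Bijective f)
    (v : ι → α) : IsNearUnanimous (f ∘ v) ↔ IsNearUnanimous v := by
  constructor
  · rintro ⟨y, j, h⟩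
    obtain ⟨x, rfl⟩ := hf.2 y
    exact ⟨x, j, fun a ha => hf.1 (h a ha)⟩
  · rintro ⟨x, j, h⟩
    exact ⟨f x, j, fun a ha => congrArg f (h a ha)⟩

section flipAt

variable {ι : Type*} [DecidableEq ι]

def flipAt (x : Bool) (o : Option ι) (a : ι) : Bool :=
  if o = some a then !x else x

lemma flipAt_eq_not_iff (x : Bool) (o : Option ι) (a : ι) : flipAt x o a = !x ↔ o = some a := by
  unfold flipAt; split_ifs with h <;> simp [h]

lemma flipAt_of_ne (x : Bool) {o : Option ι} {a : ι} (h : o ≠ some a) : flipAt x o a = x :=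
  if_neg h

lemma flipAt_injective [Fintype ι] (hι : 3 ≤ Fintype.card ι) :
    Function.Injective fun p : Bool × Option ι => flipAt p.1 p.2 := by
  rintro ⟨x, o⟩ ⟨x', o'⟩ h
  have hlt : #(o.toFinset ∪ o'.toFinset) < #(univ : Finset ι) := by
    have := card_union_le o.toFinset o'.toFinset
    rw [Option.card_toFinset, Option.card_toFinset, card_univ] at *
    cases o <;> cases o' <;> simp at * <;> omega
  obtain ⟨a, -, ha⟩ := exists_mem_notMem_of_card_lt_card hlt
  simp only [mem_union, Option.mem_toFinset, Option.mem_def, not_or] at ha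
  have hx : x = x' := by
    simpa only [flipAt_of_ne _ ha.1, flipAt_of_ne _ ha.2] using congrFun h a
  subst hx
  refine Prod.ext rfl (Option.ext fun j => ?_)
  rw [← flipAt_eq_not_iff, ← flipAt_eq_not_iff]
  exact Eq.congr_left (congrFun h j)

end flipAt

lemma card_isNearUnanimous {ι : Type*} [Fintype ι] [DecidableEq ι] (hι : 3 ≤ Fintype.card ι) :
    #{v : ι → Bool | IsNearUnanimous v} = 2 * Fintype.card ι + 2 := by
  have himage : ({v | IsNearUnanimous v} : Finset (ι → Bool)) =
      univ.image fun p : Bool × Option ι => flipAt p.1 p.2 := by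
    ext v
    simp only [mem_filter, mem_univ, true_and, mem_image, Prod.exists]
    constructor
    · rintro ⟨x, j, h⟩
      by_cases hj : v j = x
      · refine ⟨x, none, funext fun a => ?_⟩
        rw [flipAt_of_ne x (by simp)]
        by_cases ha : a = j
        · rw [ha, hj]
        · exact (h a ha).symm
      · refine ⟨x, some j, funext fun a => ?_⟩
        by_cases ha : a = j
        · subst ha
          rw [(flipAt_eq_not_iff x _ a).2 rfl]
          cases x <;> simpa using Ne.symm hj
        · rw [flipAt_of_ne x (by simpa using Ne.symm ha), h a ha]
    · rintro ⟨x, o, rfl⟩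
      cases o with
      | none =>
        obtain ⟨j⟩ : Nonempty ι := Fintype.card_pos_iff.mp (by omega)
        exact ⟨x, j, fun a _ => flipAt_of_ne x (by simp)⟩
      | some j => exact ⟨x, j, fun a ha => flipAt_of_ne x (by simpa using Ne.symm ha)⟩
  rw [himage, card_image_of_injective _ (flipAt_injective hι), card_univ,
    Fintype.card_prod, Fintype.card_option, Fintype.card_bool]
  ring

lemma card_filter_comp_mul_card_eq {α β : Type*} [Fintype α] [Fintype β] [DecidableEq β]
    {g : α → β} (hg : ∀ v w, #{x | g x = v} = #{x | g x = w}) (P : β → Prop)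
    [DecidablePred P] :
    #{x | P (g x)} * Fintype.card β = #{v | P v} * Fintype.card α := by
  have hfiber : ∀ v, #{x | g x = v} * Fintype.card β = Fintype.card α := fun v => calc
    #{x | g x = v} * Fintype.card β = ∑ w, #{x | g x = w} := by
      rw [sum_congr rfl fun w _ => hg w v, sum_const, card_univ, smul_eq_mul, mul_comm]
    _ = Fintype.card α := (card_eq_sum_card_fiberwise fun x _ => mem_univ (g x)).symm
  rw [card_eq_sum_card_fiberwise (f := g) (t := {v | P v}) (fun x hx => by simpa using hx),
    sum_mul, ← sum_const_nat fun v hv => hfiber v]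
  refine sum_congr rfl fun v hv => ?_
  congr 2
  ext x
  simp only [mem_filter, mem_univ, true_and] at hv ⊢
  exact ⟨And.right, fun hx => ⟨hx ▸ hv, hx⟩⟩

section blockParities

variable {n : ℕ} {ι : Type*} (I : ι → Finset (Fin n))

def blockParities (S : Finset (Fin n)) (a : ι) : Bool :=
  parityBit S fun j => decide (j ∈ I a)

lemma blockParities_symmDiff (S D : Finset (Fin n)) (a : ι) :
    blockParities I (S ∆ D) a = (blockParities I S a ^^ blockParities I D a) :=
  parityBit_symmDiff S D _

variable {I}

lemma blockParities_surjective (hne : ∀ a, (I a).Nonempty)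
    (hdisj : ∀ a b, a ≠ b → Disjoint (I a) (I b)) : Function.Surjective (blockParities I) := by
  classical
  choose r hr using hne
  have hr_mem : ∀ a b, r b ∈ I a ↔ b = a := fun a b =>
    ⟨fun h => by_contra fun hba => disjoint_left.mp (hdisj b a hba) (hr b) h,
      by rintro rfl; exact hr b⟩
  intro w
  refine ⟨({j | ∃ b, w b = true ∧ r b = j} : Finset (Fin n)), funext fun a => ?_⟩
  rw [blockParities, parityBit_eq_bodd]
  cases hw : w a
  · convert Nat.bodd_zero
    simp only [card_eq_zero, filter_eq_empty_iff, mem_filter, mem_univ, true_and,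
      decide_eq_true_eq]
    rintro _ ⟨b, hb, rfl⟩ hba
    rw [hr_mem] at hba
    simp [← hba, hb] at hw
  · convert Nat.bodd_one
    rw [card_eq_one]
    refine ⟨r a, ext fun j => ?_⟩
    simp only [mem_filter, mem_univ, true_and, decide_eq_true_eq, mem_singleton]
    constructor
    · rintro ⟨⟨b, -, rfl⟩, hb⟩
      rw [(hr_mem a b).1 hb]
    · rintro rfl
      exact ⟨⟨a, hw, rfl⟩, hr a⟩

lemma card_fiber_blockParities_eq [Fintype ι] (hne : ∀ a, (I a).Nonempty)
    (hdisj : ∀ a b, a ≠ b → Disjoint (I a) (I b)) (v w : ι → Bool) :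
    #{S | blockParities I S = v} = #{S | blockParities I S = w} := by
  obtain ⟨D, hD⟩ := blockParities_surjective hne hdisj fun a => v a ^^ w a
  have hshift : ∀ S, blockParities I (S ∆ D) = fun a => blockParities I S a ^^ v a ^^ w a :=
    fun S => funext fun a => by rw [blockParities_symmDiff, hD, Bool.xor_assoc]
  refine card_nbij' (· ∆ D) (· ∆ D) ?_ ?_ ?_ ?_
  · intro S hS
    simp only [coe_filter, mem_univ, true_and, Set.mem_ofPred_eq] at hS ⊢
    simp [hshift, hS]
  · intro S hS
    simp only [coe_filter, mem_univ, true_and, Set.mem_ofPred_eq] at hS ⊢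
    simp [hshift, hS, Bool.xor_left_comm]
  · exact fun S _ => symmDiff_symmDiff_cancel_right D S
  · exact fun S _ => symmDiff_symmDiff_cancel_right D S

end blockParities

/-- Let `k ≥ 4` and suppose the partial `k`-NU operation applies
non-projectively to `t₁,…,t_k ∈ {0,1}^n` with result `t`, witnessed by
nonempty pairwise disjoint deviation sets `I a`. Then the number of sets
`S ⊆ [n]` for which the column of parity bits `(y(t₁),…,y(t_k))` lies in the
domain of the partial `k`-NU operation (i.e. all but at most one coordinate
agree) is exactly `((2k+2)/2^k)·2^n`. -/
theorem stmt_18 (k n : ℕ) (hk : 4 ≤ k) (t : Fin n → Bool)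
    (ts : Fin k → (Fin n → Bool)) (I : Fin k → Finset (Fin n))
    (hne : ∀ a, (I a).Nonempty)
    (hdisj : ∀ a b, a ≠ b → Disjoint (I a) (I b))
    (hflip : ∀ a j, ts a j ≠ t j ↔ j ∈ I a) :
    2 ^ k * (Finset.univ.filter fun S : Finset (Fin n) =>
        ∃ (x : Bool) (jj : Fin k), ∀ a, a ≠ jj → parityBit S (ts a) = x).card
      = (2 * k + 2) * 2 ^ n := by
  have hts : ∀ S a, parityBit S (ts a) = (parityBit S t ^^ blockParities I S a) := fun S a => by
    rw [blockParities, ← parityBit_xor]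
    exact congrArg _ (funext fun j => Bool.eq_xor_decide_of_ne_iff (hflip a j))
  have hreduce : #{S | ∃ (x : Bool) (jj : Fin k), ∀ a, a ≠ jj → parityBit S (ts a) = x} =
      #{S | IsNearUnanimous (blockParities I S)} := by
    refine congrArg card (filter_congr fun S _ => ?_)
    simp only [hts]
    exact isNearUnanimous_comp_iff (Bool.xor_left_involutive _).bijective _
  have hcount :=
    card_filter_comp_mul_card_eq (card_fiber_blockParities_eq hne hdisj) IsNearUnanimous
  rw [card_isNearUnanimous (by rw [Fintype.card_fin]; omega), Fintype.card_fun,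
    Fintype.card_bool, Fintype.card_finset, Fintype.card_fin, Fintype.card_fin] at hcount
  rw [mul_comm, hreduce, hcount]
end
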